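/- Let S = {S_k}_{k∈K} ⊂ 𝔽^{d×d} be a bounded set of matrices and let S⁺ denote the multiplicative semigroup generated by S (all finite products of matrices from S). If every element of S⁺ has pure peripheral spectrum, then ρ(AB) = ρ(A)·ρ(B) for all A, B ∈ S⁺; that is, S⁺ is a semigroup with multiplicative spectral radius. -/
import Mathlib


open Filter Topology

/-- The canonical embedding of `𝕜` (= ℝ or ℂ) into `ℂ`. -/
noncomputable def RCLike.toComplexHom {𝕜 : Type*} [RCLike 𝕜] : 𝕜 →+* ℂ where
  toFun x := ⟨RCLike.re x, RCLike.im x⟩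
  map_one' := by simp [Complex.ext_iff]
  map_mul' x y := by simp [Complex.ext_iff, RCLike.mul_re, RCLike.mul_im]
  map_zero' := by simp [Complex.ext_iff]
  map_add' x y := by simp [Complex.ext_iff]

/-- The eigenvalues (over ℂ, with multiplicity) of a matrix over `𝕜` = ℝ or ℂ:
the complex roots of its characteristic polynomial. -/
noncomputable def Matrix.cEigenvalues {𝕜 : Type*} [RCLike 𝕜] {d : ℕ}
    (A : Matrix (Fin d) (Fin d) 𝕜) : Multiset ℂ :=
  ((A.map RCLike.toComplexHom).charpoly).roots

/-- The spectral radius: maximal modulus of a (complex) eigenvalue. -/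
noncomputable def Matrix.specRad {𝕜 : Type*} [RCLike 𝕜] {d : ℕ}
    (A : Matrix (Fin d) (Fin d) 𝕜) : ℝ :=
  (((A.cEigenvalues).map fun z => ‖z‖₊).sup : NNReal)

/-- The product `S_{σ 0} * S_{σ 1} * ⋯ * S_{σ (n-1)}` associated with a finite word `σ`. -/
noncomputable def wordProd {𝕜 : Type*} [RCLike 𝕜] {d n : ℕ} {K : Type*}
    (S : K → Matrix (Fin d) (Fin d) 𝕜) (σ : Fin n → K) : Matrix (Fin d) (Fin d) 𝕜 :=
  (List.ofFn fun j => S (σ j)).prod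

/-- The generalized spectral radius of the indexed set of matrices `S`. -/
noncomputable def genSpecRad {𝕜 : Type*} [RCLike 𝕜] {d : ℕ} {K : Type*}
    (S : K → Matrix (Fin d) (Fin d) 𝕜) : ℝ :=
  sSup { r : ℝ | ∃ n : ℕ, 1 ≤ n ∧ ∃ σ : Fin n → K, r = (wordProd S σ).specRad ^ ((n : ℝ)⁻¹) }

/-- The spectral finiteness property. -/
def FinitenessProperty {𝕜 : Type*} [RCLike 𝕜] {d : ℕ} {K : Type*}
    (S : K → Matrix (Fin d) (Fin d) 𝕜) : Prop :=
  ∃ n : ℕ, 1 ≤ n ∧ ∃ σ : Fin n → K, genSpecRad S = (wordProd S σ).specRad ^ ((n : ℝ)⁻¹)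

/-- An indexed set of matrices is bounded. -/
def IsBoundedFamily {𝕜 : Type*} [RCLike 𝕜] {d : ℕ} {K : Type*}
    (S : K → Matrix (Fin d) (Fin d) 𝕜) : Prop :=
  ∃ C : ℝ, ∀ k i j, ‖S k i j‖ ≤ C

/-- `S` is irreducible: no common invariant subspace except `⊥` and `⊤`. -/
def IsIrreducibleFamily {𝕜 : Type*} [RCLike 𝕜] {d : ℕ} {K : Type*}
    (S : K → Matrix (Fin d) (Fin d) 𝕜) : Prop :=
  ∀ p : Submodule 𝕜 (Fin d → 𝕜), (∀ k, ∀ x ∈ p, (S k).mulVec x ∈ p) → p = ⊥ ∨ p = ⊤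

/-- The limit semigroup `S_∞`. -/
def limitSemigroup {𝕜 : Type*} [RCLike 𝕜] {d : ℕ} {K : Type*}
    (S : K → Matrix (Fin d) (Fin d) 𝕜) : Set (Matrix (Fin d) (Fin d) 𝕜) :=
  { A | ∃ (n : ℕ → ℕ) (σ : (ℓ : ℕ) → Fin (n ℓ) → K),
      Tendsto n atTop atTop ∧
      Tendsto (fun ℓ => ((genSpecRad S) ^ (n ℓ))⁻¹ • wordProd S (σ ℓ)) atTop (𝓝 A) }

/-- `A` belongs to the multiplicative semigroup generated by the family `S`. -/
def memSemigroup {𝕜 : Type*} [RCLike 𝕜] {d : ℕ} {K : Type*}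
    (S : K → Matrix (Fin d) (Fin d) 𝕜) (A : Matrix (Fin d) (Fin d) 𝕜) : Prop :=
  ∃ n : ℕ, 1 ≤ n ∧ ∃ σ : Fin n → K, A = wordProd S σ


lemma card_cEigenvalues {𝕜 : Type*} [RCLike 𝕜] {d : ℕ}
    (A : Matrix (Fin d) (Fin d) 𝕜) : A.cEigenvalues.card = d := by
  have h : (A.map RCLike.toComplexHom).charpoly.roots.card
      = (A.map RCLike.toComplexHom).charpoly.natDegree :=
    Polynomial.splits_iff_card_roots.mp (IsAlgClosed.splits (k := ℂ) _)
  rw [Matrix.cEigenvalues, h, Matrix.charpoly_natDegree_eq_dim, Fintype.card_fin]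

lemma specRad_nonneg {𝕜 : Type*} [RCLike 𝕜] {d : ℕ}
    (A : Matrix (Fin d) (Fin d) 𝕜) : 0 ≤ A.specRad :=
  NNReal.coe_nonneg _

lemma norm_multiset_prod' (s : Multiset ℂ) : ‖s.prod‖ = (s.map fun z => ‖z‖).prod := by
  induction s using Multiset.induction with
  | empty => simp
  | cons a s ih => simp [norm_mul, ih]

lemma memSemigroup_mul {𝕜 : Type*} [RCLike 𝕜] {d : ℕ} {K : Type*}
    {S : K → Matrix (Fin d) (Fin d) 𝕜} {A B : Matrix (Fin d) (Fin d) 𝕜}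
    (hA : memSemigroup S A) (hB : memSemigroup S B) : memSemigroup S (A * B) := by
  obtain ⟨n, hn, σ, rfl⟩ := hA
  obtain ⟨m, hm, τ, rfl⟩ := hB
  refine ⟨n + m, by omega, Fin.append σ τ, ?_⟩
  have hfn : (List.ofFn fun j => S (Fin.append σ τ j))
      = (List.ofFn fun j => S (σ j)) ++ (List.ofFn fun j => S (τ j)) := by
    rw [← List.ofFn_fin_append]
    refine congrArg List.ofFn (funext fun i => ?_)
    refine Fin.addCases (fun i => ?_) (fun i => ?_) i <;>
      simp [Fin.append_left, Fin.append_right]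
  rw [wordProd, wordProd, wordProd, hfn, List.prod_append]

lemma norm_det_eq_specRad_pow {𝕜 : Type*} [RCLike 𝕜] {d : ℕ}
    (A : Matrix (Fin d) (Fin d) 𝕜)
    (h : ∀ z ∈ A.cEigenvalues, ‖z‖ = A.specRad) :
    ‖(A.map RCLike.toComplexHom).det‖ = A.specRad ^ d := by
  rw [Matrix.det_eq_prod_roots_charpoly]
  rw [show (A.map RCLike.toComplexHom).charpoly.roots = A.cEigenvalues from rfl]
  rw [norm_multiset_prod']
  have hrep : (A.cEigenvalues.map fun z => ‖z‖) = Multiset.replicate d A.specRad := by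
    refine Multiset.eq_replicate.mpr ⟨by rw [Multiset.card_map, card_cEigenvalues], ?_⟩
    intro b hb
    obtain ⟨z, hz, rfl⟩ := Multiset.mem_map.mp hb
    exact h z hz
  rw [hrep, Multiset.prod_replicate]

lemma specRad_eq_zero_of_dim_zero {𝕜 : Type*} [RCLike 𝕜]
    (A : Matrix (Fin 0) (Fin 0) 𝕜) : A.specRad = 0 := by
  have h : A.cEigenvalues = 0 := Multiset.card_eq_zero.mp (card_cEigenvalues A)
  simp [Matrix.specRad, h]

/-- If every element of the multiplicative semigroup generated by a bounded set
of matrices has pure peripheral spectrum, then the semigroup has multiplicative spectral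
radius: `ρ(A * B) = ρ(A) * ρ(B)` for all `A, B` in it. -/
theorem multiplicative_specRad_of_pure_peripheral
    {𝕜 : Type*} [RCLike 𝕜] {d : ℕ} {K : Type*}
    (S : K → Matrix (Fin d) (Fin d) 𝕜) (hbdd : IsBoundedFamily S)
    (hpure : ∀ A, memSemigroup S A → ∀ z ∈ A.cEigenvalues, ‖z‖ = A.specRad) :
    ∀ A B, memSemigroup S A → memSemigroup S B →
      (A * B).specRad = A.specRad * B.specRad := by
  intro A B hA hB
  rcases Nat.eq_zero_or_pos d with hd | hd
  · subst hd
    rw [specRad_eq_zero_of_dim_zero, specRad_eq_zero_of_dim_zero, specRad_eq_zero_of_dim_zero]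
    ring
  · have hAB := memSemigroup_mul hA hB
    have h1 := norm_det_eq_specRad_pow A (hpure A hA)
    have h2 := norm_det_eq_specRad_pow B (hpure B hB)
    have h3 := norm_det_eq_specRad_pow (A * B) (hpure _ hAB)
    rw [Matrix.map_mul, Matrix.det_mul, norm_mul, h1, h2] at h3
    have := pow_left_inj₀ (specRad_nonneg (A * B))
      (mul_nonneg (specRad_nonneg A) (specRad_nonneg B)) hd.ne'
    exact this.mp (by rw [mul_pow, ← h3])
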